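/- arXiv:math/0502010 — 2 statements merged into one kernel-verified Lean document; each statement's English description precedes it below -/
import Mathlib

section
/- Let H be a real or complex inner product space and a ∈ H a unit vector. Let x₁,…,xₙ ∈ H be nonzero vectors, set α = min_{1≤k≤n} ‖x_k‖, and suppose p ∈ (0, √(α² + 1)) satisfies ‖x_k − a‖ ≤ p for all k ∈ {1,…,n}. Define α₁ = min_{1≤k≤n} (‖x_k‖² − p² + 1)/(2‖x_k‖). Then α₁ · Σ_{k=1}^n ‖x_k‖ ≤ ‖Σ_{k=1}^n x_k‖, with equality if and only if Σ_{k=1}^n x_k = α₁ (Σ_{k=1}^n ‖x_k‖) a. -/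
/-!
Expanding `‖x - a‖² ≤ p²` gives `re ⟪x, a⟫ ≥ (‖x‖² - p² + 1) / 2 ≥ α₁ ‖x‖` for each `x = x_k`;
summing and applying Cauchy–Schwarz against the unit vector `a` gives
`α₁ ∑ ‖x_k‖ ≤ re ⟪∑ x_k, a⟫ ≤ ‖∑ x_k‖`. The bound `p < √(α² + 1)` makes `α₁ ≥ 0`, and for
`t ≥ 0` with `t ≤ re ⟪u, a⟫` the expansion `‖u - t a‖² = ‖u‖² - 2 t re ⟪u, a⟫ + t²` vanishes
when `t = ‖u‖`, which is the equality case.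
-/

open RCLike Finset

section UnitVector

variable {𝕜 H : Type*} [RCLike 𝕜] [NormedAddCommGroup H] [InnerProductSpace 𝕜 H] {a : H}

theorem re_inner_le_norm_of_norm_eq_one (ha : ‖a‖ = 1) (u : H) : re (inner 𝕜 u a) ≤ ‖u‖ := by
  simpa [ha] using re_inner_le_norm (𝕜 := 𝕜) u a

theorem div_two_le_re_inner_of_norm_sub_le (ha : ‖a‖ = 1) {x : H} {p : ℝ}
    (h : ‖x - a‖ ≤ p) : (‖x‖ ^ 2 - p ^ 2 + 1) / 2 ≤ re (inner 𝕜 x a) := by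
  have hsq : ‖x - a‖ ^ 2 ≤ p ^ 2 := pow_le_pow_left₀ (norm_nonneg _) h 2
  rw [norm_sub_sq (𝕜 := 𝕜), ha] at hsq
  linarith

theorem mul_norm_le_re_inner_of_norm_sub_le (ha : ‖a‖ = 1) {x : H} {p c : ℝ} (h : ‖x - a‖ ≤ p)
    (hc : c ≤ (‖x‖ ^ 2 - p ^ 2 + 1) / (2 * ‖x‖)) : c * ‖x‖ ≤ re (inner 𝕜 x a) := by
  rcases eq_or_ne x 0 with rfl | hx
  · simp
  have hx' : 0 < ‖x‖ := norm_pos_iff.mpr hx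
  calc c * ‖x‖ ≤ (‖x‖ ^ 2 - p ^ 2 + 1) / (2 * ‖x‖) * ‖x‖ := by gcongr
    _ = (‖x‖ ^ 2 - p ^ 2 + 1) / 2 := by field_simp
    _ ≤ re (inner 𝕜 x a) := div_two_le_re_inner_of_norm_sub_le ha h

theorem mul_sum_norm_le_re_inner_sum {ι : Type*} (s : Finset ι) (ha : ‖a‖ = 1) {x : ι → H}
    {p c : ℝ} (h : ∀ k ∈ s, ‖x k - a‖ ≤ p)
    (hc : ∀ k ∈ s, c ≤ (‖x k‖ ^ 2 - p ^ 2 + 1) / (2 * ‖x k‖)) :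
    c * ∑ k ∈ s, ‖x k‖ ≤ re (inner 𝕜 (∑ k ∈ s, x k) a) := by
  rw [sum_inner, map_sum, mul_sum]
  exact sum_le_sum fun k hk => mul_norm_le_re_inner_of_norm_sub_le ha (h k hk) (hc k hk)

theorem eq_norm_iff_eq_smul_of_le_re_inner (ha : ‖a‖ = 1) {u : H} {t : ℝ} (ht : 0 ≤ t)
    (h : t ≤ re (inner 𝕜 u a)) : t = ‖u‖ ↔ u = (t : 𝕜) • a := by
  constructor
  · rintro rfl
    have hsq : ‖u - ((‖u‖ : ℝ) : 𝕜) • a‖ ^ 2 ≤ 0 := by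
      rw [norm_sub_sq (𝕜 := 𝕜), inner_smul_right, norm_smul, ha, norm_ofReal, abs_norm,
        re_ofReal_mul]
      nlinarith
    rw [← sub_eq_zero, ← norm_eq_zero]
    exact pow_eq_zero_iff two_ne_zero |>.mp (le_antisymm hsq (sq_nonneg _))
  · rintro rfl
    rw [norm_smul, ha, mul_one, norm_ofReal, abs_of_nonneg ht]

end UnitVector

theorem sq_sub_sq_add_one_div_nonneg {r p α : ℝ} (hα : 0 ≤ α) (hr : α ≤ r) (hp₀ : 0 ≤ p)
    (hp : p < √(α ^ 2 + 1)) : 0 ≤ (r ^ 2 - p ^ 2 + 1) / (2 * r) := by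
  have : p ^ 2 < α ^ 2 + 1 := (Real.lt_sqrt hp₀).mp hp
  have : α ^ 2 ≤ r ^ 2 := pow_le_pow_left₀ hα hr 2
  exact div_nonneg (by linarith) (by linarith)

theorem stmt_5_general {𝕜 H : Type*} [RCLike 𝕜] [NormedAddCommGroup H] [InnerProductSpace 𝕜 H]
    (a : H) (ha : ‖a‖ = 1) (n : ℕ) (x : Fin n → H)
    (α : ℝ) (hα : α = ⨅ k, ‖x k‖)
    (p : ℝ) (hp : p ∈ Set.Ioo 0 (Real.sqrt (α ^ 2 + 1)))
    (h : ∀ k, ‖x k - a‖ ≤ p)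
    (α₁ : ℝ) (hα₁ : α₁ = ⨅ k, (‖x k‖ ^ 2 - p ^ 2 + 1) / (2 * ‖x k‖)) :
    α₁ * ∑ k, ‖x k‖ ≤ ‖∑ k, x k‖ ∧
      (α₁ * ∑ k, ‖x k‖ = ‖∑ k, x k‖ ↔ ∑ k, x k = ((α₁ * ∑ k, ‖x k‖ : ℝ) : 𝕜) • a) := by
  have hα₀ : 0 ≤ α := hα ▸ Real.iInf_nonneg fun k => norm_nonneg _
  have hα_le : ∀ k, α ≤ ‖x k‖ := fun k => hα ▸ ciInf_le (Finite.bddBelow_range _) k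
  have hα₁₀ : 0 ≤ α₁ := hα₁ ▸ Real.iInf_nonneg fun k =>
    sq_sub_sq_add_one_div_nonneg hα₀ (hα_le k) hp.1.le hp.2
  have hlow : α₁ * ∑ k, ‖x k‖ ≤ re (inner 𝕜 (∑ k, x k) a) :=
    mul_sum_norm_le_re_inner_sum univ ha (fun k _ => h k)
      fun k _ => hα₁ ▸ ciInf_le (Finite.bddBelow_range _) k
  exact ⟨hlow.trans (re_inner_le_norm_of_norm_eq_one ha _),
    eq_norm_iff_eq_smul_of_le_re_inner ha (by positivity) hlow⟩

theorem stmt_5 {𝕜 H : Type*} [RCLike 𝕜] [NormedAddCommGroup H] [InnerProductSpace 𝕜 H]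
    (a : H) (ha : ‖a‖ = 1) (n : ℕ) (hn : 0 < n) (x : Fin n → H) (hx : ∀ k, x k ≠ 0)
    (α : ℝ) (hα : α = ⨅ k, ‖x k‖)
    (p : ℝ) (hp : p ∈ Set.Ioo 0 (Real.sqrt (α ^ 2 + 1)))
    (h : ∀ k, ‖x k - a‖ ≤ p)
    (α₁ : ℝ) (hα₁ : α₁ = ⨅ k, (‖x k‖ ^ 2 - p ^ 2 + 1) / (2 * ‖x k‖)) :
    α₁ * ∑ k, ‖x k‖ ≤ ‖∑ k, x k‖ ∧
      (α₁ * ∑ k, ‖x k‖ = ‖∑ k, x k‖ ↔ ∑ k, x k = ((α₁ * ∑ k, ‖x k‖ : ℝ) : 𝕜) • a) :=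
  stmt_5_general a ha n x α hα p hp h α₁ hα₁
end

section
/- Let H be a complex inner product space and a ∈ H a unit vector. Let x₁,…,xₙ ∈ H be nonzero vectors and suppose p₁, p₂ ∈ (0, 1] satisfy ‖x_k − a‖ ≤ p₁ and ‖x_k − i a‖ ≤ p₂ for all k ∈ {1,…,n}. Define α₁ = min_{1≤k≤n} (‖x_k‖² − p₁² + 1)/(2‖x_k‖) and α₂ = min_{1≤k≤n} (‖x_k‖² − p₂² + 1)/(2‖x_k‖). If α₁ ≠ √(1 − p₁²) or α₂ ≠ √(1 − p₂²), then the strict inequality (2 − p₁² − p₂²)^{1/2} · Σ_{k=1}^n ‖x_k‖ < ‖Σ_{k=1}^n x_k‖ holds. -/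
/-!
Expanding `‖x_k - b‖² ≤ p²` for a unit vector `b` gives `Re ⟪x_k, b⟫ ≥ (‖x_k‖² - p² + 1) / 2`,
hence `Re ⟪x_k, a⟫ ≥ α₁ ‖x_k‖` and `Re ⟪x_k, i a⟫ ≥ α₂ ‖x_k‖`. Summing over `k`, and using that
`Re ⟪y, a⟫` and `Re ⟪y, i a⟫ = -Im ⟪y, a⟫` are the two coordinates of `⟪y, a⟫`, we get
`(α₁² + α₂²) (∑ ‖x_k‖)² ≤ ‖∑ x_k‖²`. By AM-GM each `α_j ≥ √(1 - p_j²)`, strictly for some `j`.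
-/

open scoped InnerProductSpace

theorem Real.sqrt_one_sub_sq_le_div {r p : ℝ} (hr : 0 < r) (hp : 0 ≤ 1 - p ^ 2) :
    √(1 - p ^ 2) ≤ (r ^ 2 - p ^ 2 + 1) / (2 * r) := by
  rw [le_div_iff₀ (by positivity)]
  nlinarith [Real.sq_sqrt hp, sq_nonneg (r - √(1 - p ^ 2))]

section RCLike

variable {𝕜 E : Type*} [RCLike 𝕜] [NormedAddCommGroup E] [InnerProductSpace 𝕜 E]

theorem half_sub_sq_add_one_le_re_inner {x b : E} {p : ℝ} (hb : ‖b‖ = 1)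
    (hp : ‖x - b‖ ≤ p) :
    (‖x‖ ^ 2 - p ^ 2 + 1) / 2 ≤ RCLike.re ⟪x, b⟫_𝕜 := by
  have hsq : ‖x - b‖ ^ 2 ≤ p ^ 2 := pow_le_pow_left₀ (norm_nonneg _) hp 2
  rw [@norm_sub_sq 𝕜, hb] at hsq
  linarith

theorem iInf_mul_sum_norm_le_re_inner_sum {ι : Type*} [Fintype ι] {x : ι → E} {b : E} {p : ℝ}
    (hb : ‖b‖ = 1) (hx : ∀ k, x k ≠ 0) (hp : ∀ k, ‖x k - b‖ ≤ p) :
    (⨅ k, (‖x k‖ ^ 2 - p ^ 2 + 1) / (2 * ‖x k‖)) * ∑ k, ‖x k‖ ≤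
      RCLike.re ⟪∑ k, x k, b⟫_𝕜 := by
  rw [sum_inner, map_sum, Finset.mul_sum]
  refine Finset.sum_le_sum fun k _ => ?_
  have hxk : 0 < ‖x k‖ := norm_pos_iff.2 (hx k)
  calc (⨅ k, (‖x k‖ ^ 2 - p ^ 2 + 1) / (2 * ‖x k‖)) * ‖x k‖
      ≤ (‖x k‖ ^ 2 - p ^ 2 + 1) / (2 * ‖x k‖) * ‖x k‖ :=
        mul_le_mul_of_nonneg_right (ciInf_le (Set.finite_range _).bddBelow k) hxk.le
    _ = (‖x k‖ ^ 2 - p ^ 2 + 1) / 2 := by field_simp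
    _ ≤ RCLike.re ⟪x k, b⟫_𝕜 := half_sub_sq_add_one_le_re_inner hb (hp k)

end RCLike

theorem sq_re_inner_add_sq_re_inner_I_smul_le {H : Type*} [NormedAddCommGroup H]
    [InnerProductSpace ℂ H] (y a : H) :
    (⟪y, a⟫_ℂ).re ^ 2 + (⟪y, Complex.I • a⟫_ℂ).re ^ 2 ≤ (‖y‖ * ‖a‖) ^ 2 := by
  have him : (⟪y, Complex.I • a⟫_ℂ).re = -(⟪y, a⟫_ℂ).im := by
    simp only [inner_smul_right, Complex.mul_re, Complex.I_re, Complex.I_im]; ring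
  calc (⟪y, a⟫_ℂ).re ^ 2 + (⟪y, Complex.I • a⟫_ℂ).re ^ 2 = ‖⟪y, a⟫_ℂ‖ ^ 2 := by
        rw [him, Complex.sq_norm, Complex.normSq_apply]; ring
    _ ≤ (‖y‖ * ‖a‖) ^ 2 := pow_le_pow_left₀ (norm_nonneg _) (norm_inner_le_norm y a) 2

theorem sq_add_sq_lt_sq_add_sq_of_le {s₁ s₂ t₁ t₂ : ℝ} (hs₁ : 0 ≤ s₁) (hs₂ : 0 ≤ s₂)
    (h₁ : s₁ ≤ t₁) (h₂ : s₂ ≤ t₂) (hne : t₁ ≠ s₁ ∨ t₂ ≠ s₂) :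
    s₁ ^ 2 + s₂ ^ 2 < t₁ ^ 2 + t₂ ^ 2 := by
  have q₁ := pow_le_pow_left₀ hs₁ h₁ 2
  have q₂ := pow_le_pow_left₀ hs₂ h₂ 2
  rcases hne with h | h
  · linarith [pow_lt_pow_left₀ (h₁.lt_of_ne' h) hs₁ two_ne_zero]
  · linarith [pow_lt_pow_left₀ (h₂.lt_of_ne' h) hs₂ two_ne_zero]

theorem stmt_13 {H : Type*} [NormedAddCommGroup H] [InnerProductSpace ℂ H]
    (a : H) (ha : ‖a‖ = 1) (n : ℕ) (hn : 0 < n) (x : Fin n → H) (hx : ∀ k, x k ≠ 0)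
    (p₁ p₂ : ℝ) (hp₁ : p₁ ∈ Set.Ioc (0 : ℝ) 1) (hp₂ : p₂ ∈ Set.Ioc (0 : ℝ) 1)
    (h₁ : ∀ k, ‖x k - a‖ ≤ p₁) (h₂ : ∀ k, ‖x k - Complex.I • a‖ ≤ p₂)
    (α₁ α₂ : ℝ)
    (hα₁ : α₁ = ⨅ k, (‖x k‖ ^ 2 - p₁ ^ 2 + 1) / (2 * ‖x k‖))
    (hα₂ : α₂ = ⨅ k, (‖x k‖ ^ 2 - p₂ ^ 2 + 1) / (2 * ‖x k‖))
    (hne : α₁ ≠ Real.sqrt (1 - p₁ ^ 2) ∨ α₂ ≠ Real.sqrt (1 - p₂ ^ 2)) :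
    Real.sqrt (2 - p₁ ^ 2 - p₂ ^ 2) * ∑ k, ‖x k‖ < ‖∑ k, x k‖ := by
  have : Nonempty (Fin n) := ⟨⟨0, hn⟩⟩
  set T := ∑ k, ‖x k‖
  have hT : 0 < T := Finset.sum_pos (fun k _ => norm_pos_iff.2 (hx k)) Finset.univ_nonempty
  have hq₁ : 0 ≤ 1 - p₁ ^ 2 := by nlinarith [hp₁.1, hp₁.2]
  have hq₂ : 0 ≤ 1 - p₂ ^ 2 := by nlinarith [hp₂.1, hp₂.2]
  have hs₁ : √(1 - p₁ ^ 2) ≤ α₁ :=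
    hα₁ ▸ le_ciInf fun k => Real.sqrt_one_sub_sq_le_div (norm_pos_iff.2 (hx k)) hq₁
  have hs₂ : √(1 - p₂ ^ 2) ≤ α₂ :=
    hα₂ ▸ le_ciInf fun k => Real.sqrt_one_sub_sq_le_div (norm_pos_iff.2 (hx k)) hq₂
  have hIa : ‖Complex.I • a‖ = 1 := by rw [norm_smul, Complex.norm_I, ha, one_mul]
  have hA : α₁ * T ≤ (⟪∑ k, x k, a⟫_ℂ).re :=
    hα₁ ▸ iInf_mul_sum_norm_le_re_inner_sum (𝕜 := ℂ) ha hx h₁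
  have hB : α₂ * T ≤ (⟪∑ k, x k, Complex.I • a⟫_ℂ).re :=
    hα₂ ▸ iInf_mul_sum_norm_le_re_inner_sum (𝕜 := ℂ) hIa hx h₂
  have hlt : 2 - p₁ ^ 2 - p₂ ^ 2 < α₁ ^ 2 + α₂ ^ 2 := by
    have := sq_add_sq_lt_sq_add_sq_of_le (Real.sqrt_nonneg _) (Real.sqrt_nonneg _) hs₁ hs₂ hne
    rw [Real.sq_sqrt hq₁, Real.sq_sqrt hq₂] at this
    linarith
  have hle : (α₁ * T) ^ 2 + (α₂ * T) ^ 2 ≤ ‖∑ k, x k‖ ^ 2 := by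
    have := sq_re_inner_add_sq_re_inner_I_smul_le (∑ k, x k) a
    rw [ha, mul_one] at this
    refine le_trans (add_le_add ?_ ?_) this
    · exact pow_le_pow_left₀ (mul_nonneg ((Real.sqrt_nonneg _).trans hs₁) hT.le) hA 2
    · exact pow_le_pow_left₀ (mul_nonneg ((Real.sqrt_nonneg _).trans hs₂) hT.le) hB 2
  refine lt_of_pow_lt_pow_left₀ 2 (norm_nonneg _) ?_
  calc (√(2 - p₁ ^ 2 - p₂ ^ 2) * T) ^ 2 = (2 - p₁ ^ 2 - p₂ ^ 2) * T ^ 2 := by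
        rw [mul_pow, Real.sq_sqrt (by linarith)]
    _ < (α₁ ^ 2 + α₂ ^ 2) * T ^ 2 := by gcongr
    _ = (α₁ * T) ^ 2 + (α₂ * T) ^ 2 := by ring
    _ ≤ ‖∑ k, x k‖ ^ 2 := hle
end
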